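/- arXiv:1807.11729 — 8 statements merged into one kernel-verified Lean document; each statement's English description precedes it below -/
import Mathlib

section
/- For the Labouchère system with any nonempty initial list of positive reals and winning probability p = 1/2, the largest betting size has infinite expectation: E[B*] = ∞. -/
open MeasureTheory ProbabilityTheory ENNReal

/-- The Labouchère bet for a current list: the sum of the first and last entries if the
list has at least two entries, the single entry if the list is a singleton, and `0` for
the empty list. -/
noncomputable def labBet (L : List ℝ) : ℝ :=
  if L.length = 1 then L.headI else L.headI + L.getLastD 0

/-- One step of the Labouchère evolution: after a win the first and last entries are
removed (the single entry if the list is a singleton); after a loss the amount just lost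
is appended as a new last entry.  The empty list stays empty. -/
noncomputable def labStep (L : List ℝ) (win : Bool) : List ℝ :=
  if L = [] then [] else if win then L.tail.dropLast else L ++ [labBet L]

/-- The Labouchère evolution from the initial list `L₀` driven by the outcome sequence
`w` (`w n = true` means a win at coup `n`, for `n ≥ 1`): `labList L₀ w n` is the list
after the `n`-th coup, so the bet at coup `n + 1` is `labBet (labList L₀ w n)`. -/
noncomputable def labList (L₀ : List ℝ) (w : ℕ → Bool) : ℕ → List ℝ
  | 0 => L₀
  | n + 1 => labStep (labList L₀ w n) (w (n + 1))

/-!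
The list sum `S` is a martingale (a win removes the bet from the list, a loss appends it) which
at most doubles in one coup. Optional stopping therefore shows that `S` reaches a level `y > S₀`
with probability between `S₀ / (2 y)` and `S₀ / y`; the lower bound needs the list to empty
almost surely, which follows from the potential `l + 1` of the length `l`, decreasing by `1 / 2`
on average. The potential `(3 / 2) ^ l` decreases on average, so the length reaches `λ` with
probability at most `(3 / 2) ^ (l₀ - λ)`. Every entry of a list is an initial entry or an earlier
bet, so once the sum reaches `y ≥ 2 λ S₀` with at most `λ` entries, some bet is at least
`y / (2 λ)`. For `y_k = 2 S₀ 8 ^ k` and `λ_k = 6 k`, the events "the sum reaches `y_k` but not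
`y_(k+1)`, and the length stays below `λ_k`" are disjoint, have probability at least
`1 / (8 · 8 ^ k)` for large `k`, and force `B* ≥ S₀ 8 ^ k / (6 k)`; hence
`E[B*] ≥ ∑ S₀ / (48 k) = ∞`.
-/

open Function

namespace Labouchere

section ListStep

variable {L : List ℝ}

lemma labBet_singleton (a : ℝ) : labBet [a] = a := by simp [labBet]

lemma labBet_cons_cons (a b : ℝ) (M : List ℝ) :
    labBet (a :: b :: M) = a + (b :: M).getLast (List.cons_ne_nil b M) := by
  have hlen : (a :: b :: M).length ≠ 1 := by simp
  simp only [labBet, if_neg hlen, List.headI]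
  rw [show (a :: b :: M).getLastD 0 = (b :: M).getLastD 0 from rfl, List.getLastD_eq_getLast?,
    List.getLast?_eq_some_getLast (List.cons_ne_nil b M)]
  rfl

lemma labBet_pos (hne : L ≠ []) (hpos : ∀ x ∈ L, 0 < x) : 0 < labBet L := by
  match L, hne with
  | [a], _ => simpa [labBet_singleton] using hpos a (by simp)
  | a :: b :: M, _ =>
    rw [labBet_cons_cons]
    exact add_pos (hpos a (by simp)) (hpos _ (List.mem_cons_of_mem a (List.getLast_mem _)))

lemma labBet_le_sum (hpos : ∀ x ∈ L, 0 < x) : labBet L ≤ L.sum := by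
  match L with
  | [] => simp [labBet]; rfl
  | [a] => simp [labBet_singleton]
  | a :: b :: M =>
    rw [labBet_cons_cons, List.sum_cons]
    gcongr
    exact List.single_le_sum (fun x hx => (hpos x (List.mem_cons_of_mem a hx)).le) _
      (List.getLast_mem _)

lemma labStep_nil (b : Bool) : labStep [] b = [] := by simp [labStep]

lemma sum_labStep_true (hne : L ≠ []) : (labStep L true).sum = L.sum - labBet L := by
  match L, hne with
  | [a], _ => simp [labStep, labBet_singleton]
  | a :: b :: M, _ =>
    have hsplit := congrArg List.sum (List.dropLast_append_getLast (List.cons_ne_nil b M))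
    simp only [List.sum_append, List.sum_cons, List.sum_nil, add_zero] at hsplit
    simp only [labStep, List.cons_ne_nil, if_false, if_true, List.tail_cons, labBet_cons_cons,
      List.sum_cons]
    linarith

lemma sum_labStep_false (hne : L ≠ []) : (labStep L false).sum = L.sum + labBet L := by
  simp [labStep, hne]

lemma sum_labStep_avg (L : List ℝ) :
    ((labStep L true).sum + (labStep L false).sum) / 2 = L.sum := by
  rcases eq_or_ne L [] with rfl | hne
  · simp [labStep_nil]
  · rw [sum_labStep_true hne, sum_labStep_false hne]
    ring

lemma sum_labStep_le (hpos : ∀ x ∈ L, 0 < x) (b : Bool) : (labStep L b).sum ≤ 2 * L.sum := by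
  rcases eq_or_ne L [] with rfl | hne
  · simp [labStep_nil]
  have hbet := labBet_le_sum hpos
  have hnonneg := (labBet_pos hne hpos).le
  cases b
  · rw [sum_labStep_false hne]; linarith
  · rw [sum_labStep_true hne]; linarith

lemma length_labStep_true (hne : L ≠ []) : (labStep L true).length = L.length - 2 := by
  simp [labStep, hne]
  omega

lemma length_labStep_false (hne : L ≠ []) : (labStep L false).length = L.length + 1 := by
  simp [labStep, hne]

lemma mem_labStep {x : ℝ} {b : Bool} (hx : x ∈ labStep L b) :
    L ≠ [] ∧ (x ∈ L ∨ x = labBet L) := by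
  rcases eq_or_ne L [] with rfl | hne
  · simp [labStep_nil] at hx
  refine ⟨hne, ?_⟩
  cases b
  · simpa [labStep, hne] using hx
  · simp only [labStep, hne, if_false, if_true] at hx
    exact Or.inl (List.mem_of_mem_tail (List.mem_of_mem_dropLast hx))

lemma pos_of_mem_labStep (hpos : ∀ x ∈ L, 0 < x) {b : Bool} :
    ∀ x ∈ labStep L b, 0 < x := by
  intro x hx
  obtain ⟨hne, hx | rfl⟩ := mem_labStep hx
  · exact hpos x hx
  · exact labBet_pos hne hpos

end ListStep

/-- The list reached from `L₀` along the outcome word `u`, whose head is the latest coup. -/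
noncomputable def run (L₀ : List ℝ) : List Bool → List ℝ
  | [] => L₀
  | b :: u => labStep (run L₀ u) b

/-- The outcomes of the coups `n, n - 1, …, 1`. -/
def history (w : ℕ → Bool) : ℕ → List Bool
  | 0 => []
  | n + 1 => w (n + 1) :: history w n

lemma labList_eq_run (L₀ : List ℝ) (w : ℕ → Bool) (n : ℕ) :
    labList L₀ w n = run L₀ (history w n) := by
  induction n with
  | zero => rfl
  | succ n ih => simp [labList, history, run, ih]

lemma pos_of_mem_run {L₀ : List ℝ} (hpos : ∀ x ∈ L₀, 0 < x) (u : List Bool) :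
    ∀ x ∈ run L₀ u, 0 < x := by
  induction u with
  | nil => exact hpos
  | cons b u ih => exact pos_of_mem_labStep ih

lemma mem_labList {L₀ : List ℝ} {w : ℕ → Bool} {n : ℕ} {x : ℝ} (hx : x ∈ labList L₀ w n) :
    x ∈ L₀ ∨ ∃ k < n, x = labBet (labList L₀ w k) := by
  induction n with
  | zero => exact Or.inl hx
  | succ n ih =>
    obtain ⟨-, hx | rfl⟩ := mem_labStep hx
    · exact (ih hx).imp_right fun ⟨k, hk, hxk⟩ => ⟨k, by omega, hxk⟩
    · exact Or.inr ⟨n, n.lt_succ_self, rfl⟩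

/-- The mean of `F` over the `2 ^ n` outcome words of length `n`. -/
noncomputable def avg : ℕ → (List Bool → ℝ) → ℝ
  | 0, F => F []
  | n + 1, F => avg n fun u => (F (true :: u) + F (false :: u)) / 2

section Avg

variable {F G : List Bool → ℝ}

lemma avg_mono (h : ∀ u, F u ≤ G u) (n : ℕ) : avg n F ≤ avg n G := by
  induction n generalizing F G with
  | zero => exact h []
  | succ n ih =>
    exact ih fun u => by linarith [h (true :: u), h (false :: u)]

lemma avg_add (F G : List Bool → ℝ) (n : ℕ) :
    avg n (fun u => F u + G u) = avg n F + avg n G := by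
  induction n generalizing F G with
  | zero => rfl
  | succ n ih =>
    simp only [avg, ← ih]
    congr 1
    ext u
    ring

lemma avg_const_mul (c : ℝ) (F : List Bool → ℝ) (n : ℕ) :
    avg n (fun u => c * F u) = c * avg n F := by
  induction n generalizing F with
  | zero => rfl
  | succ n ih =>
    simp only [avg, ← ih]
    congr 1
    ext u
    ring

lemma avg_le_of_avg_step_le (h : ∀ u, (F (true :: u) + F (false :: u)) / 2 ≤ F u) (n : ℕ) :
    avg n F ≤ F [] := by
  induction n with
  | zero => exact le_rfl
  | succ n ih => exact (avg_mono h n).trans ih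

lemma avg_eq_of_avg_step_eq (h : ∀ u, (F (true :: u) + F (false :: u)) / 2 = F u) (n : ℕ) :
    avg n F = F [] := by
  induction n with
  | zero => rfl
  | succ n ih => rw [avg, funext h, ih]

lemma avg_nonneg (h : ∀ u, 0 ≤ F u) (n : ℕ) : 0 ≤ avg n F :=
  le_of_eq_of_le (avg_eq_of_avg_step_eq (F := fun _ => 0) (by simp) n).symm (avg_mono h n)

end Avg

noncomputable def prob (n : ℕ) (S : Set (List Bool)) : ℝ := avg n (S.indicator 1)

lemma prob_nonneg (n : ℕ) (S : Set (List Bool)) : 0 ≤ prob n S :=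
  avg_nonneg (fun _ => Set.indicator_nonneg (fun _ _ => zero_le_one) _) n

lemma prob_succ (n : ℕ) (S : Set (List Bool)) :
    prob (n + 1) S = (prob n ((true :: ·) ⁻¹' S) + prob n ((false :: ·) ⁻¹' S)) / 2 := by
  simp only [prob, avg, avg_add, div_eq_mul_inv, mul_comm _ (2 : ℝ)⁻¹, avg_const_mul]
  rfl

lemma prob_succ_le_of_cons_mem {S T : Set (List Bool)} (h : ∀ b u, b :: u ∈ S → u ∈ T)
    (n : ℕ) : prob (n + 1) S ≤ prob n T := by
  refine avg_mono (fun u => ?_) n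
  have key (b : Bool) : S.indicator 1 (b :: u) ≤ T.indicator (1 : List Bool → ℝ) u :=
    Set.indicator_le_indicator_of_subset (h b) (fun _ => zero_le_one) u
  linarith [key true, key false]

section Stopping

variable (L₀ : List ℝ) (P : List ℝ → Prop)

def Reaches : List Bool → Prop
  | [] => P L₀
  | b :: u => Reaches u ∨ P (run L₀ (b :: u))

open Classical in
noncomputable def stopped (Φ : List ℝ → ℝ) : List Bool → ℝ
  | [] => Φ L₀
  | b :: u => if Reaches L₀ P u then stopped Φ u else Φ (run L₀ (b :: u))

variable {L₀ P} {Φ : List ℝ → ℝ}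

lemma reaches_of_run {u : List Bool} (h : P (run L₀ u)) : Reaches L₀ P u := by
  cases u with
  | nil => exact h
  | cons b u => exact Or.inr h

lemma reaches_history_iff (w : ℕ → Bool) (n : ℕ) :
    Reaches L₀ P (history w n) ↔ ∃ m ≤ n, P (labList L₀ w m) := by
  induction n with
  | zero => simp [Reaches, history, labList]
  | succ n ih =>
    rw [history, Reaches, ih, ← history, ← labList_eq_run]
    simp only [Nat.le_succ_iff]
    constructor
    · rintro (⟨m, hm, h⟩ | h)
      exacts [⟨m, Or.inl hm, h⟩, ⟨n + 1, Or.inr rfl, h⟩]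
    · rintro ⟨m, hm | rfl, h⟩
      exacts [Or.inl ⟨m, hm, h⟩, Or.inr h]

lemma stopped_of_not_reaches {u : List Bool} (h : ¬ Reaches L₀ P u) :
    stopped L₀ P Φ u = Φ (run L₀ u) := by
  cases u with
  | nil => rfl
  | cons b u => exact if_neg fun hu => h (Or.inl hu)

lemma exists_stopped_eq (u : List Bool) : ∃ v, stopped L₀ P Φ u = Φ (run L₀ v) := by
  induction u with
  | nil => exact ⟨[], rfl⟩
  | cons b u ih =>
    by_cases h : Reaches L₀ P u
    · simpa [stopped, h] using ih
    · exact ⟨b :: u, if_neg h⟩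

lemma le_stopped_of_reaches {c : ℝ} (hΦ : ∀ L, P L → c ≤ Φ L) {u : List Bool}
    (h : Reaches L₀ P u) : c ≤ stopped L₀ P Φ u := by
  induction u with
  | nil => exact hΦ _ h
  | cons b u ih =>
    by_cases hu : Reaches L₀ P u
    · simpa [stopped, hu] using ih hu
    · simp only [stopped, if_neg hu]
      exact hΦ _ (h.resolve_left hu)

open Classical in
lemma stopped_avg_step (u : List Bool) :
    (stopped L₀ P Φ (true :: u) + stopped L₀ P Φ (false :: u)) / 2 =
      if Reaches L₀ P u then stopped L₀ P Φ u
      else (Φ (labStep (run L₀ u) true) + Φ (labStep (run L₀ u) false)) / 2 := by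
  by_cases h : Reaches L₀ P u
  · simp [stopped, h]
  · simp [stopped, h, run]

lemma avg_stopped_le (hΦ : ∀ L, (Φ (labStep L true) + Φ (labStep L false)) / 2 ≤ Φ L)
    (n : ℕ) : avg n (stopped L₀ P Φ) ≤ Φ L₀ := by
  refine avg_le_of_avg_step_le (fun u => ?_) n
  rw [stopped_avg_step]
  split_ifs with h
  · exact le_rfl
  · exact (hΦ _).trans (stopped_of_not_reaches h).ge

lemma avg_stopped_eq (hΦ : ∀ L, (Φ (labStep L true) + Φ (labStep L false)) / 2 = Φ L)
    (n : ℕ) : avg n (stopped L₀ P Φ) = Φ L₀ := by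
  refine avg_eq_of_avg_step_eq (fun u => ?_) n
  rw [stopped_avg_step]
  split_ifs with h
  · rfl
  · exact (hΦ _).trans (stopped_of_not_reaches h).symm

lemma mul_prob_reaches_le_avg_stopped {c : ℝ} (hc : ∀ L, P L → c ≤ Φ L)
    (hΦ : ∀ v, 0 ≤ Φ (run L₀ v)) (n : ℕ) :
    c * prob n {u | Reaches L₀ P u} ≤ avg n (stopped L₀ P Φ) := by
  rw [prob, ← avg_const_mul]
  refine avg_mono (fun u => ?_) n
  by_cases h : Reaches L₀ P u
  · simpa [h] using le_stopped_of_reaches hc h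
  · obtain ⟨v, hv⟩ := exists_stopped_eq (L₀ := L₀) (P := P) (Φ := Φ) u
    simpa [h, hv] using hΦ v

end Stopping

section SumBounds

variable {L₀ : List ℝ} (hpos : ∀ x ∈ L₀, 0 < x)
include hpos

lemma prob_reaches_sum_le (y : ℝ) (n : ℕ) :
    y * prob n {u | Reaches L₀ (y ≤ ·.sum) u} ≤ L₀.sum :=
  (mul_prob_reaches_le_avg_stopped (fun _ hL => hL)
    (fun v => List.sum_nonneg fun x hx => (pos_of_mem_run hpos v x hx).le) n).trans_eq
    (avg_stopped_eq sum_labStep_avg n)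

lemma stopped_sum_le {y : ℝ} (hy : L₀.sum < y) (u : List Bool) :
    stopped L₀ (y ≤ ·.sum) List.sum u ≤ 2 * y := by
  have hy0 : 0 < y := (List.sum_nonneg fun x hx => (hpos x hx).le).trans_lt hy
  induction u with
  | nil => show L₀.sum ≤ 2 * y; linarith
  | cons b u ih =>
    by_cases h : Reaches L₀ (y ≤ ·.sum) u
    · simpa [stopped, h] using ih
    · have hlt : (run L₀ u).sum < y := lt_of_not_ge fun hle => h (reaches_of_run hle)
      simp only [stopped, if_neg h]
      exact (sum_labStep_le (pos_of_mem_run hpos u) b).trans (by linarith)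

/-- Optional stopping for the sum: its stopped version is a martingale bounded by `2 y`, and it
vanishes once the list is empty. -/
lemma sum_le_prob_reaches_add_prob_alive {y : ℝ} (hy : L₀.sum < y) (n : ℕ) :
    L₀.sum ≤ 2 * y * prob n {u | Reaches L₀ (y ≤ ·.sum) u} + y * prob n {u | run L₀ u ≠ []} := by
  have hy0 : 0 < y := (List.sum_nonneg fun x hx => (hpos x hx).le).trans_lt hy
  rw [prob, prob, ← avg_const_mul, ← avg_const_mul, ← avg_add]
  refine (avg_stopped_eq (L₀ := L₀) (P := (y ≤ ·.sum)) sum_labStep_avg n).symm.trans_le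
    (avg_mono (fun u => ?_) n)
  have hle := stopped_sum_le hpos hy u
  by_cases h : Reaches L₀ (y ≤ ·.sum) u
  · have : 0 ≤ y * ({u | run L₀ u ≠ []} : Set (List Bool)).indicator 1 u :=
      mul_nonneg hy0.le (Set.indicator_nonneg (fun _ _ => zero_le_one) _)
    simp only [Set.indicator_of_mem (show u ∈ {u | Reaches L₀ (y ≤ ·.sum) u} from h),
      Pi.one_apply]
    linarith
  · have hlt : (run L₀ u).sum < y := lt_of_not_ge fun hle => h (reaches_of_run hle)
    rw [stopped_of_not_reaches h]
    by_cases ha : run L₀ u = []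
    · simp [h, ha]
    · simp [h, ha, hlt.le]

end SumBounds

noncomputable def expLengthPot (L : List ℝ) : ℝ := if L = [] then 0 else (3 / 2) ^ L.length

noncomputable def linLengthPot (L : List ℝ) : ℝ := if L = [] then 0 else L.length + 1

lemma expLengthPot_nonneg (L : List ℝ) : 0 ≤ expLengthPot L := by
  unfold expLengthPot; split_ifs <;> positivity

lemma linLengthPot_nonneg (L : List ℝ) : 0 ≤ linLengthPot L := by
  unfold linLengthPot; split_ifs <;> positivity

lemma expLengthPot_avg_step_le (L : List ℝ) :
    (expLengthPot (labStep L true) + expLengthPot (labStep L false)) / 2 ≤ expLengthPot L := by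
  rcases eq_or_ne L [] with rfl | hne
  · simp [labStep_nil, expLengthPot]
  have hfalse : labStep L false ≠ [] := by
    simp [← List.length_pos_iff, length_labStep_false hne]
  simp only [expLengthPot, if_neg hne, if_neg hfalse, length_labStep_false hne]
  split_ifs with htrue
  · rw [pow_succ]
    nlinarith [pow_pos (by norm_num : (0 : ℝ) < 3 / 2) L.length]
  · obtain ⟨m, hm⟩ : ∃ m, L.length = m + 2 := ⟨L.length - 2, by
      have := List.length_pos_iff.2 htrue; rw [length_labStep_true hne] at this; omega⟩
    rw [length_labStep_true hne, hm, Nat.add_sub_cancel, pow_add, pow_succ, pow_add]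
    nlinarith [pow_pos (by norm_num : (0 : ℝ) < 3 / 2) m]

lemma linLengthPot_avg_step_add_le {L : List ℝ} (hne : L ≠ []) :
    (linLengthPot (labStep L true) + linLengthPot (labStep L false)) / 2 + 1 / 2 ≤
      linLengthPot L := by
  have hfalse : labStep L false ≠ [] := by
    simp [← List.length_pos_iff, length_labStep_false hne]
  have hlen := List.length_pos_iff.2 hne
  simp only [linLengthPot, if_neg hne, if_neg hfalse, length_labStep_false hne]
  split_ifs with htrue
  · push_cast
    have : (1 : ℝ) ≤ L.length := by exact_mod_cast hlen
    linarith
  · have h3 := List.length_pos_iff.2 htrue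
    rw [length_labStep_true hne] at h3 ⊢
    rw [Nat.cast_sub (by omega)]
    push_cast
    linarith

lemma prob_reaches_length_le (L₀ : List ℝ) {lam : ℕ} (hlam : 1 ≤ lam) (n : ℕ) :
    (3 / 2) ^ lam * prob n {u | Reaches L₀ (lam ≤ ·.length) u} ≤ (3 / 2) ^ L₀.length := by
  refine (mul_prob_reaches_le_avg_stopped (fun L hL => ?_) (fun _ => expLengthPot_nonneg _) n).trans
    ((avg_stopped_le expLengthPot_avg_step_le n).trans ?_)
  · have hne : L ≠ [] := List.length_pos_iff.1 (by omega)
    simp only [expLengthPot, if_neg hne]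
    exact pow_le_pow_right₀ (by norm_num) hL
  · unfold expLengthPot
    split_ifs
    exacts [by positivity, le_rfl]

lemma avg_linLengthPot_add_sum_prob_alive_le (L₀ : List ℝ) (n : ℕ) :
    avg n (fun u => linLengthPot (run L₀ u)) +
      (1 / 2) * ∑ k ∈ Finset.range n, prob k {u | run L₀ u ≠ []} ≤ linLengthPot L₀ := by
  induction n with
  | zero => simp [avg, run]
  | succ n ih =>
    have step : avg (n + 1) (fun u => linLengthPot (run L₀ u)) +
        (1 / 2) * prob n {u | run L₀ u ≠ []} ≤ avg n (fun u => linLengthPot (run L₀ u)) := by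
      rw [avg, prob, ← avg_const_mul, ← avg_add]
      refine avg_mono (fun u => ?_) n
      by_cases hu : run L₀ u = []
      · simp [run, hu, labStep_nil, linLengthPot]
      · simpa [hu, run] using linLengthPot_avg_step_add_le hu
    rw [Finset.sum_range_succ]
    linarith

lemma prob_alive_antitone (L₀ : List ℝ) : Antitone fun n => prob n {u | run L₀ u ≠ []} := by
  refine antitone_nat_of_succ_le fun n => prob_succ_le_of_cons_mem (fun b u h => ?_) n
  change run L₀ (b :: u) ≠ [] at h
  exact fun hu => h (by simp [run, hu, labStep_nil])

lemma prob_alive_le (L₀ : List ℝ) (n : ℕ) :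
    (n + 1) * prob n {u | run L₀ u ≠ []} ≤ 2 * linLengthPot L₀ := by
  have hsum : (n + 1) * prob n {u | run L₀ u ≠ []} ≤
      ∑ k ∈ Finset.range (n + 1), prob k {u | run L₀ u ≠ []} := by
    simpa using Finset.card_nsmul_le_sum (Finset.range (n + 1)) _ _ fun k hk =>
      prob_alive_antitone L₀ (Finset.mem_range_succ_iff.1 hk)
  have := avg_linLengthPot_add_sum_prob_alive_le L₀ (n + 1)
  have := avg_nonneg (fun u => linLengthPot_nonneg (run L₀ u)) (n + 1)
  linarith

lemma history_congr {w w' : ℕ → Bool} {n : ℕ} (h : ∀ k ∈ Finset.Icc 1 n, w k = w' k) :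
    history w n = history w' n := by
  induction n with
  | zero => rfl
  | succ n ih =>
    rw [history, history, h (n + 1) (by simp),
      ih fun k hk => h k (by simp only [Finset.mem_Icc] at hk ⊢; omega)]

lemma exists_history_eq_comp (n : ℕ) :
    ∃ g : (Finset.Icc 1 n → Bool) → List Bool, ∀ w, history w n = g fun i => w i :=
  ⟨fun v => history (fun k => if hk : k ∈ Finset.Icc 1 n then v ⟨k, hk⟩ else false) n,
    fun _ => history_congr fun k hk => by simp [hk]⟩

section Transfer

variable {Ω : Type*} [MeasurableSpace Ω] {μ : Measure Ω} {W : ℕ → Ω → Bool}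

lemma measurableSet_history_mem (hW : ∀ n, Measurable (W n)) (n : ℕ) (S : Set (List Bool)) :
    MeasurableSet {ω | history (fun k => W k ω) n ∈ S} := by
  obtain ⟨g, hg⟩ := exists_history_eq_comp n
  simp only [hg]
  exact (Set.toFinite (g ⁻¹' S)).measurableSet.preimage (measurable_pi_lambda _ fun i => hW i)

lemma measure_coup_inter_history_mem (hW : ∀ n, Measurable (W n))
    (hindep : iIndepFun (m := fun _ => ⊤) W μ) (n : ℕ) (b : Bool) (S : Set (List Bool)) :
    μ ({ω | W (n + 1) ω = b} ∩ {ω | history (fun k => W k ω) n ∈ S}) =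
      μ {ω | W (n + 1) ω = b} * μ {ω | history (fun k => W k ω) n ∈ S} := by
  obtain ⟨g, hg⟩ := exists_history_eq_comp n
  have hind := hindep.indepFun_finset {n + 1} (Finset.Icc 1 n) (by simp) hW
  let B : Set (({n + 1} : Finset ℕ) → Bool) := {v | v ⟨n + 1, Finset.mem_singleton_self _⟩ = b}
  have hcoup : {ω | W (n + 1) ω = b} = (fun ω (i : ({n + 1} : Finset ℕ)) => W i ω) ⁻¹' B := rfl
  simp only [hg, hcoup]
  exact hind.measure_inter_preimage_eq_mul B (g ⁻¹' S) (Set.toFinite B).measurableSet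
    (Set.toFinite (g ⁻¹' S)).measurableSet

lemma measure_coup_eq [IsProbabilityMeasure μ] (hW : ∀ n, Measurable (W n))
    (hbern : ∀ n, 1 ≤ n → μ {ω | W n ω = true} = ENNReal.ofReal (1 / 2))
    {k : ℕ} (hk : 1 ≤ k) (b : Bool) : μ {ω | W k ω = b} = 2⁻¹ := by
  have htrue : μ {ω | W k ω = true} = 2⁻¹ := by
    rw [hbern k hk, one_div, ENNReal.ofReal_inv_of_pos two_pos, ENNReal.ofReal_ofNat]
  cases b
  · have hcompl : {ω | W k ω = false} = {ω | W k ω = true}ᶜ := by ext; simp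
    rw [hcompl, prob_compl_eq_one_sub
      (show MeasurableSet {ω | W k ω = true} from hW k (measurableSet_singleton true)), htrue,
      ENNReal.one_sub_inv_two]
  · exact htrue

lemma measure_history_mem [IsProbabilityMeasure μ] (hW : ∀ n, Measurable (W n))
    (hindep : iIndepFun (m := fun _ => ⊤) W μ)
    (hbern : ∀ n, 1 ≤ n → μ {ω | W n ω = true} = ENNReal.ofReal (1 / 2))
    (n : ℕ) (S : Set (List Bool)) :
    μ {ω | history (fun k => W k ω) n ∈ S} = ENNReal.ofReal (prob n S) := by
  induction n generalizing S with
  | zero => by_cases h : [] ∈ S <;> simp [history, prob, avg, h]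
  | succ n ih =>
    have hsplit : {ω | history (fun k => W k ω) (n + 1) ∈ S} =
        ({ω | W (n + 1) ω = true} ∩ {ω | history (fun k => W k ω) n ∈ (true :: ·) ⁻¹' S}) ∪
        ({ω | W (n + 1) ω = false} ∩ {ω | history (fun k => W k ω) n ∈ (false :: ·) ⁻¹' S}) := by
      ext ω
      cases h : W (n + 1) ω <;> simp [history, h]
    have hdisj : Disjoint ({ω | W (n + 1) ω = true} ∩
        {ω | history (fun k => W k ω) n ∈ (true :: ·) ⁻¹' S})
        ({ω | W (n + 1) ω = false} ∩ {ω | history (fun k => W k ω) n ∈ (false :: ·) ⁻¹' S}) :=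
      Set.disjoint_left.2 fun ω h1 h2 => by simp_all
    rw [hsplit, measure_union hdisj ((hW (n + 1) (measurableSet_singleton false)).inter
        (measurableSet_history_mem hW n _)),
      measure_coup_inter_history_mem hW hindep, measure_coup_inter_history_mem hW hindep,
      measure_coup_eq hW hbern (by omega), measure_coup_eq hW hbern (by omega), ih, ih, prob_succ,
      ENNReal.ofReal_div_of_pos two_pos, ENNReal.ofReal_add (prob_nonneg _ _) (prob_nonneg _ _),
      ENNReal.ofReal_ofNat, div_eq_mul_inv]
    ring

end Transfer

lemma exists_labBet_ge_of_length_le {L₀ : List ℝ} (hpos : ∀ x ∈ L₀, 0 < x) {w : ℕ → Bool}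
    {n lam : ℕ} {t : ℝ} (ht : L₀.sum ≤ t) (hlen : (labList L₀ w n).length ≤ lam)
    (hsum : lam * t < (labList L₀ w n).sum) : ∃ k < n, t ≤ labBet (labList L₀ w k) := by
  by_contra! hbet
  have ht0 : 0 ≤ t := (List.sum_nonneg fun x hx => (hpos x hx).le).trans ht
  have hle : ∀ x ∈ labList L₀ w n, x ≤ t := fun x hx => by
    rcases mem_labList hx with hx | ⟨k, hk, rfl⟩
    · exact (List.single_le_sum (fun y hy => (hpos y hy).le) x hx).trans ht
    · exact (hbet k hk).le
  have := List.sum_le_card_nsmul _ t hle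
  rw [nsmul_eq_mul] at this
  have : ((labList L₀ w n).length : ℝ) * t ≤ lam * t := by gcongr
  linarith

section Events

variable {Ω : Type*} {W : ℕ → Ω → Bool} {L₀ : List ℝ}

def reachEvent (W : ℕ → Ω → Bool) (L₀ : List ℝ) (P : List ℝ → Prop) : Set Ω :=
  {ω | ∃ n, P (labList L₀ (fun k => W k ω) n)}

lemma reachEvent_eq_iUnion (P : List ℝ → Prop) :
    reachEvent W L₀ P = ⋃ n, {ω | Reaches L₀ P (history (fun k => W k ω) n)} := by
  ext ω
  simp only [reachEvent, Set.mem_iUnion, Set.mem_ofPred_eq, reaches_history_iff]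
  exact ⟨fun ⟨n, h⟩ => ⟨n, n, le_rfl, h⟩, fun ⟨_, m, _, h⟩ => ⟨m, h⟩⟩

variable [MeasurableSpace Ω] {μ : Measure Ω}

lemma measurableSet_reachEvent (hW : ∀ n, Measurable (W n)) (P : List ℝ → Prop) :
    MeasurableSet (reachEvent W L₀ P) := by
  rw [reachEvent_eq_iUnion]
  exact .iUnion fun n => measurableSet_history_mem hW n _

variable [IsProbabilityMeasure μ] (hW : ∀ n, Measurable (W n))
  (hindep : iIndepFun (m := fun _ => ⊤) W μ)
  (hbern : ∀ n, 1 ≤ n → μ {ω | W n ω = true} = ENNReal.ofReal (1 / 2))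
include hW hindep hbern

lemma measure_reachEvent_le {P : List ℝ → Prop} {c : ℝ}
    (h : ∀ n, prob n {u | Reaches L₀ P u} ≤ c) : μ (reachEvent W L₀ P) ≤ ENNReal.ofReal c := by
  rw [reachEvent_eq_iUnion, (monotone_nat_of_le_succ fun n ω hω => Or.inl hω).measure_iUnion]
  exact iSup_le fun n => (measure_history_mem hW hindep hbern n {u | Reaches L₀ P u}).trans_le
    (ENNReal.ofReal_le_ofReal (h n))

lemma ofReal_prob_le_measure_reachEvent (P : List ℝ → Prop) (n : ℕ) :
    ENNReal.ofReal (prob n {u | Reaches L₀ P u}) ≤ μ (reachEvent W L₀ P) := by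
  rw [← measure_history_mem hW hindep hbern n {u | Reaches L₀ P u}, reachEvent_eq_iUnion]
  exact measure_mono (Set.subset_iUnion_of_subset n le_rfl)

lemma measure_reachEvent_sum_le (hpos : ∀ x ∈ L₀, 0 < x) {y : ℝ} (hy : 0 < y) :
    μ (reachEvent W L₀ (y ≤ ·.sum)) ≤ ENNReal.ofReal (L₀.sum / y) :=
  measure_reachEvent_le hW hindep hbern fun n => by
    rw [le_div_iff₀ hy, mul_comm]
    exact prob_reaches_sum_le hpos y n

lemma measure_reachEvent_length_le {lam : ℕ} (hlam : 1 ≤ lam) :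
    μ (reachEvent W L₀ (lam ≤ ·.length)) ≤
      ENNReal.ofReal ((3 / 2) ^ L₀.length / (3 / 2) ^ lam) :=
  measure_reachEvent_le hW hindep hbern fun n => by
    rw [le_div_iff₀ (by positivity), mul_comm]
    exact prob_reaches_length_le L₀ hlam n

lemma ofReal_le_measure_reachEvent_sum (hpos : ∀ x ∈ L₀, 0 < x) {y : ℝ} (hy : L₀.sum < y) :
    ENNReal.ofReal (L₀.sum / (2 * y)) ≤ μ (reachEvent W L₀ (y ≤ ·.sum)) := by
  have hy0 : 0 < y := (List.sum_nonneg fun x hx => (hpos x hx).le).trans_lt hy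
  set c := linLengthPot L₀
  have hbound (n : ℕ) : L₀.sum / (2 * y) - c * (1 / ((n : ℝ) + 1)) ≤
      prob n {u | Reaches L₀ (y ≤ ·.sum) u} := by
    have hreach := sum_le_prob_reaches_add_prob_alive hpos hy n
    have halive := prob_alive_le L₀ n
    have halive' : prob n {u | run L₀ u ≠ []} ≤ 2 * c * (1 / ((n : ℝ) + 1)) := by
      rw [mul_one_div, le_div_iff₀ (by positivity)]
      linarith
    have : L₀.sum / (2 * y) ≤ prob n {u | Reaches L₀ (y ≤ ·.sum) u} + c * (1 / ((n : ℝ) + 1)) := by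
      rw [div_le_iff₀ (by positivity)]
      nlinarith [mul_le_mul_of_nonneg_left halive' hy0.le]
    linarith
  refine le_of_tendsto' (x := Filter.atTop) (ENNReal.tendsto_ofReal ?_) fun n =>
    (ENNReal.ofReal_le_ofReal (hbound n)).trans
      (ofReal_prob_le_measure_reachEvent hW hindep hbern _ n)
  simpa using tendsto_const_nhds.sub
    ((tendsto_one_div_add_atTop_nhds_zero_nat (𝕜 := ℝ)).const_mul c)

end Events

lemma tsum_ofReal_div_nat_succ_eq_top {c : ℝ} (hc : 0 < c) :
    ∑' k : ℕ, ENNReal.ofReal (c / ((k : ℝ) + 1)) = ⊤ := by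
  have hns : ¬ Summable fun k : ℕ => c / (k + 1) := fun h =>
    Real.not_summable_one_div_natCast <| (summable_nat_add_iff 1).1 <| by
      simpa [div_eq_mul_inv, ← mul_assoc, hc.ne'] using h.mul_left c⁻¹
  have hmax (k : ℕ) : max (c / (k + 1)) 0 = c / (k + 1) := max_eq_left (by positivity)
  exact ENNReal.tsum_coe_eq_top_iff_not_summable_coe.2 (by simpa [hmax] using hns)

lemma lintegral_eq_top_of_ofReal_div_le_setLIntegral {Ω : Type*} [MeasurableSpace Ω]
    {μ : Measure Ω} {f : Ω → ℝ≥0∞} {A : ℕ → Set Ω} (hA : ∀ k, MeasurableSet (A k))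
    (hdisj : Pairwise (Disjoint on A)) {c : ℝ} (hc : 0 < c)
    (h : ∀ k : ℕ, ENNReal.ofReal (c / ((k : ℝ) + 1)) ≤ ∫⁻ ω in A k, f ω ∂μ) : ∫⁻ ω, f ω ∂μ = ⊤ := by
  refine eq_top_iff.2 ?_
  calc ⊤ = ∑' k : ℕ, ENNReal.ofReal (c / ((k : ℝ) + 1)) := (tsum_ofReal_div_nat_succ_eq_top hc).symm
    _ ≤ ∑' k, ∫⁻ ω in A k, f ω ∂μ := ENNReal.tsum_le_tsum h
    _ = ∫⁻ ω in ⋃ k, A k, f ω ∂μ := (lintegral_iUnion hA hdisj f).symm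
    _ ≤ ∫⁻ ω, f ω ∂μ := setLIntegral_le_lintegral _ _

lemma exists_pow_div_pow_le (l : ℕ) :
    ∃ k₀ ≥ 1, ∀ k ≥ k₀, (3 / 2 : ℝ) ^ l / (3 / 2) ^ (6 * k) ≤ 1 / (16 * 8 ^ k) := by
  have htend : Filter.Tendsto (fun k : ℕ => 16 * (3 / 2 : ℝ) ^ l * (512 / 729) ^ k)
      Filter.atTop (nhds 0) := by
    simpa using (tendsto_pow_atTop_nhds_zero_of_lt_one (by norm_num : (0 : ℝ) ≤ 512 / 729)
      (by norm_num)).const_mul (16 * (3 / 2 : ℝ) ^ l)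
  obtain ⟨k₁, hk₁⟩ := Filter.eventually_atTop.1 (htend.eventually (ge_mem_nhds zero_lt_one))
  refine ⟨max k₁ 1, le_max_right _ _, fun k hk => ?_⟩
  rw [div_le_div_iff₀ (by positivity) (by positivity)]
  calc (3 / 2 : ℝ) ^ l * (16 * 8 ^ k) = 16 * (3 / 2) ^ l * (512 / 729) ^ k * (729 / 64) ^ k := by
        rw [mul_assoc _ ((512 / 729 : ℝ) ^ k), ← mul_pow]
        ring_nf
    _ ≤ 1 * (729 / 64) ^ k := by gcongr; exact hk₁ k (le_of_max_le_left hk)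
    _ = 1 * (3 / 2) ^ (6 * k) := by rw [pow_mul]; norm_num

lemma six_mul_le_eight_pow (k : ℕ) : (6 * k : ℝ) ≤ 8 ^ k := by
  have := one_add_mul_le_pow (by norm_num : (-2 : ℝ) ≤ 7) k
  norm_num at this
  linarith

section Annulus

variable {Ω : Type*} {W : ℕ → Ω → Bool} {L₀ : List ℝ}

def annulus (W : ℕ → Ω → Bool) (L₀ : List ℝ) (k : ℕ) : Set Ω :=
  reachEvent W L₀ (2 * L₀.sum * 8 ^ k ≤ ·.sum) \
    (reachEvent W L₀ (2 * L₀.sum * 8 ^ (k + 1) ≤ ·.sum) ∪ reachEvent W L₀ (6 * k ≤ ·.length))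

lemma pairwise_disjoint_annulus (hs : 0 ≤ L₀.sum) : Pairwise (Disjoint on annulus W L₀) := by
  refine (pairwise_disjoint_on _).2 fun i j hij =>
    Set.disjoint_left.2 fun ω hi hj => hi.2 (Or.inl ?_)
  obtain ⟨n, hn⟩ := hj.1
  exact ⟨n, le_trans (mul_le_mul_of_nonneg_left (pow_le_pow_right₀ (by norm_num) hij)
    (by linarith)) hn⟩

lemma ofReal_le_iSup_labBet_of_mem_annulus (hpos : ∀ x ∈ L₀, 0 < x) (hs : 0 < L₀.sum) {k : ℕ}
    (hk : 1 ≤ k) {ω : Ω} (hω : ω ∈ annulus W L₀ k) :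
    ENNReal.ofReal (L₀.sum * 8 ^ k / (6 * k)) ≤
      ⨆ n, ENNReal.ofReal (labBet (labList L₀ (fun i => W i ω) n)) := by
  obtain ⟨⟨n, hn⟩, hnot⟩ := hω
  have hlen : (labList L₀ (fun i => W i ω) n).length ≤ 6 * k :=
    le_of_not_ge fun h => hnot (Or.inr ⟨n, h⟩)
  have hk' : (0 : ℝ) < 6 * k := by positivity
  have h8 : (0 : ℝ) < 8 ^ k := by positivity
  obtain ⟨m, -, hm⟩ := exists_labBet_ge_of_length_le hpos (t := L₀.sum * 8 ^ k / (6 * k))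
    (by rw [le_div_iff₀ hk']; nlinarith [six_mul_le_eight_pow k]) hlen
    (by push_cast; rw [mul_div_cancel₀ _ hk'.ne']; nlinarith)
  exact (ENNReal.ofReal_le_ofReal hm).trans
    (le_iSup (fun n => ENNReal.ofReal (labBet (labList L₀ (fun i => W i ω) n))) m)

variable [MeasurableSpace Ω] {μ : Measure Ω}

lemma measurableSet_annulus (hW : ∀ n, Measurable (W n)) (k : ℕ) :
    MeasurableSet (annulus W L₀ k) :=
  (measurableSet_reachEvent hW _).diff
    ((measurableSet_reachEvent hW _).union (measurableSet_reachEvent hW _))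

variable [IsProbabilityMeasure μ] (hW : ∀ n, Measurable (W n))
  (hindep : iIndepFun (m := fun _ => ⊤) W μ)
  (hbern : ∀ n, 1 ≤ n → μ {ω | W n ω = true} = ENNReal.ofReal (1 / 2))
include hW hindep hbern

lemma ofReal_le_measure_annulus (hpos : ∀ x ∈ L₀, 0 < x) (hs : 0 < L₀.sum) {k : ℕ} (hk : 1 ≤ k)
    (hlen : (3 / 2 : ℝ) ^ L₀.length / (3 / 2) ^ (6 * k) ≤ 1 / (16 * 8 ^ k)) :
    ENNReal.ofReal (1 / (8 * 8 ^ k)) ≤ μ (annulus W L₀ k) := by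
  have h8 : (1 : ℝ) ≤ 8 ^ k := one_le_pow₀ (by norm_num)
  have hA := ofReal_le_measure_reachEvent_sum hW hindep hbern hpos
    (y := 2 * L₀.sum * 8 ^ k) (by nlinarith)
  have hB := measure_reachEvent_sum_le hW hindep hbern hpos
    (y := 2 * L₀.sum * 8 ^ (k + 1)) (by positivity)
  have hC := measure_reachEvent_length_le hW hindep hbern (L₀ := L₀) (lam := 6 * k) (by omega)
  rw [show L₀.sum / (2 * (2 * L₀.sum * 8 ^ k)) = 1 / (4 * 8 ^ k) by field_simp; ring] at hA
  rw [show L₀.sum / (2 * L₀.sum * 8 ^ (k + 1)) = 1 / (16 * 8 ^ k) by field_simp; ring] at hB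
  set A := reachEvent W L₀ (2 * L₀.sum * 8 ^ k ≤ ·.sum)
  set B := reachEvent W L₀ (2 * L₀.sum * 8 ^ (k + 1) ≤ ·.sum)
  set C := reachEvent W L₀ (6 * k ≤ ·.length)
  calc ENNReal.ofReal (1 / (8 * 8 ^ k))
      = ENNReal.ofReal (1 / (4 * 8 ^ k)) -
          ENNReal.ofReal (1 / (16 * 8 ^ k) + 1 / (16 * 8 ^ k)) := by
        rw [← ENNReal.ofReal_sub _ (by positivity)]
        congr 1
        field_simp
        ring
    _ ≤ μ A - (μ B + μ C) := by
        rw [ENNReal.ofReal_add (by positivity) (by positivity)]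
        exact tsub_le_tsub hA (add_le_add hB (hC.trans (ENNReal.ofReal_le_ofReal hlen)))
    _ ≤ μ A - μ (B ∪ C) := tsub_le_tsub_left (measure_union_le _ _) _
    _ ≤ μ (annulus W L₀ k) := le_measure_sdiff

lemma ofReal_le_setLIntegral_annulus (hpos : ∀ x ∈ L₀, 0 < x) (hs : 0 < L₀.sum) {k : ℕ}
    (hk : 1 ≤ k) (hlen : (3 / 2 : ℝ) ^ L₀.length / (3 / 2) ^ (6 * k) ≤ 1 / (16 * 8 ^ k)) :
    ENNReal.ofReal (L₀.sum / (48 * k)) ≤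
      ∫⁻ ω in annulus W L₀ k, ⨆ n, ENNReal.ofReal (labBet (labList L₀ (fun i => W i ω) n)) ∂μ := by
  have hk' : (0 : ℝ) < k := by exact_mod_cast hk
  calc ENNReal.ofReal (L₀.sum / (48 * k))
      = ENNReal.ofReal (L₀.sum * 8 ^ k / (6 * k)) * ENNReal.ofReal (1 / (8 * 8 ^ k)) := by
        rw [← ENNReal.ofReal_mul (by positivity)]
        congr 1
        field_simp
        ring
    _ ≤ ENNReal.ofReal (L₀.sum * 8 ^ k / (6 * k)) * μ (annulus W L₀ k) := by
        gcongr
        exact ofReal_le_measure_annulus hW hindep hbern hpos hs hk hlen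
    _ = ∫⁻ _ in annulus W L₀ k, ENNReal.ofReal (L₀.sum * 8 ^ k / (6 * k)) ∂μ :=
        (setLIntegral_const _ _).symm
    _ ≤ _ := setLIntegral_mono' (measurableSet_annulus hW k) fun ω hω =>
        ofReal_le_iSup_labBet_of_mem_annulus hpos hs hk hω

end Annulus

end Labouchere

/-- For the Labouchère system with any nonempty initial list of positive reals, driven by
i.i.d. fair coups (winning probability `p = 1/2`), the largest betting size
`B⋆ = sup_{1 ≤ n ≤ N} B n` has infinite expectation.  (Bets after the list becomes empty
are `0`, so `B⋆` is the supremum over all coups of the bet, viewed in `ℝ≥0∞`.) -/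
theorem labouchere_Bstar_infinite_at_half
    {Ω : Type} [MeasurableSpace Ω] (μ : Measure Ω) [IsProbabilityMeasure μ]
    (W : ℕ → Ω → Bool) (hW : ∀ n, Measurable (W n))
    (hindep : iIndepFun (m := fun _ => ⊤) W μ)
    (hbern : ∀ n, 1 ≤ n → μ {ω | W n ω = true} = ENNReal.ofReal (1 / 2))
    (L₀ : List ℝ) (hL₀ : L₀ ≠ []) (hpos : ∀ x ∈ L₀, 0 < x) :
    ∫⁻ ω, (⨆ n : ℕ, ENNReal.ofReal (labBet (labList L₀ (fun k => W k ω) n))) ∂μ = ⊤ := by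
  have hs : 0 < L₀.sum := List.sum_pos _ hpos hL₀
  obtain ⟨k₀, hk₀, hlen⟩ := Labouchere.exists_pow_div_pow_le L₀.length
  refine Labouchere.lintegral_eq_top_of_ofReal_div_le_setLIntegral
    (fun j => Labouchere.measurableSet_annulus hW (j + k₀))
    ((Labouchere.pairwise_disjoint_annulus hs.le).comp_of_injective (add_left_injective k₀))
    (c := L₀.sum / (48 * k₀)) (by positivity) fun j => ?_
  refine le_trans (ENNReal.ofReal_le_ofReal ?_) (Labouchere.ofReal_le_setLIntegral_annulus
    hW hindep hbern hpos hs (by omega) (hlen (j + k₀) (by omega)))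
  have hk₀' : (1 : ℝ) ≤ k₀ := by exact_mod_cast hk₀
  rw [div_div]
  refine div_le_div_of_nonneg_left hs.le (by positivity) ?_
  push_cast
  nlinarith [(j.cast_nonneg : (0 : ℝ) ≤ j)]
end

section
/- Let (b̄_l)_{l=1}^∞ be a sequence in [0,1] and let (a_l)_{l=1}^∞ be a sequence of nonnegative real numbers satisfying: a_1 ≥ a_2 + 1/2, a_2 ≥ a_3 + 1/2, and for every l ≥ 3, a_l ≥ min_{b∈[0, b̄_l]} ( max{b, (1−b)·a_{l−2}} + max{b, (1+b)·a_{l+1}} ) / 2. Then the sequence is strictly decreasing: a_l > a_{l+1} for every l ≥ 1. -/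
/-!
Argue by induction, two steps at a time. Write `A = a (l-2) > a (l-1) > C = a l` and `D = a (l+1)`,
and suppose `D ≥ C`. Since the cost `max b ((1-b) A) + max b ((1+b) D)` is monotone in `D`, for every
`b ≥ 0` it is at least `(A + C + 2AC) / (1 + A)`, so the recursive inequality forces
`2 C (1 + A) ≥ A + C + 2AC`, i.e. `C ≥ A`, a contradiction.
-/

open Set

lemma add_add_mul_le_max_add_max {A C D b : ℝ} (hC : 0 ≤ C) (hCA : C ≤ A) (hCD : C ≤ D)
    (hb : 0 ≤ b) :
    A + C + 2 * A * C ≤ (1 + A) * (max b ((1 - b) * A) + max b ((1 + b) * D)) := by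
  have hM₁ : b ≤ max b ((1 - b) * A) := le_max_left _ _
  have hM₁' : (1 - b) * A ≤ max b ((1 - b) * A) := le_max_right _ _
  have hM₂ : (1 + b) * C ≤ max b ((1 + b) * D) :=
    (mul_le_mul_of_nonneg_left hCD (by linarith)).trans (le_max_right _ _)
  -- the difference of the two sides is exactly the sum of these three nonnegative products
  nlinarith [mul_nonneg (sub_nonneg.2 hCA) (sub_nonneg.2 hM₁),
    mul_nonneg (by linarith : (0 : ℝ) ≤ 1 + C) (sub_nonneg.2 hM₁'),
    mul_nonneg (by linarith : (0 : ℝ) ≤ 1 + A) (sub_nonneg.2 hM₂)]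

lemma lt_of_iInf_le {A C D β : ℝ} (hβ : 0 ≤ β) (hC : 0 ≤ C) (hCA : C < A)
    (h : (⨅ b : Icc (0 : ℝ) β, (max b.1 ((1 - b.1) * A) + max b.1 ((1 + b.1) * D)) / 2) ≤ C) :
    D < C := by
  by_contra! hCD
  have : Nonempty (Icc (0 : ℝ) β) := ⟨⟨0, le_rfl, hβ⟩⟩
  have hbound : (A + C + 2 * A * C) / (2 * (1 + A)) ≤ C := by
    refine le_trans (le_ciInf fun b => ?_) h
    rw [div_le_div_iff₀ (by linarith) two_pos]
    linarith [add_add_mul_le_max_add_max hC hCA.le hCD b.2.1]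
  rw [div_le_iff₀ (by linarith)] at hbound
  linarith

/-- Let `(b̄ l)_{l ≥ 1}` be a sequence in `[0,1]` and `(a l)_{l ≥ 1}` a sequence of
nonnegative reals with `a 1 ≥ a 2 + 1/2`, `a 2 ≥ a 3 + 1/2`, and for every `l ≥ 3`
`a l ≥ min_{b ∈ [0, b̄ l]} (max {b, (1-b)·a (l-2)} + max {b, (1+b)·a (l+1)}) / 2`
(the minimum over the compact interval is attained, and equals the infimum used below).
Then the sequence is strictly decreasing: `a l > a (l+1)` for every `l ≥ 1`. -/
theorem strictly_decreasing_of_recursive_inequalities (bbar : ℕ → ℝ)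
    (hbbar : ∀ l, 1 ≤ l → bbar l ∈ Set.Icc (0 : ℝ) 1)
    (a : ℕ → ℝ) (ha : ∀ l, 1 ≤ l → 0 ≤ a l)
    (h1 : a 2 + 1 / 2 ≤ a 1) (h2 : a 3 + 1 / 2 ≤ a 2)
    (hrec : ∀ l : ℕ, 3 ≤ l →
      (⨅ b : Set.Icc (0 : ℝ) (bbar l),
        (max b.1 ((1 - b.1) * a (l - 2)) + max b.1 ((1 + b.1) * a (l + 1))) / 2) ≤ a l) :
    ∀ l : ℕ, 1 ≤ l → a (l + 1) < a l := by
  have step (n : ℕ) (h₁ : a (n + 2) < a (n + 1)) (h₂ : a (n + 3) < a (n + 2)) :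
      a (n + 4) < a (n + 3) := by
    have hrec' := hrec (n + 3) (by omega)
    rw [show n + 3 - 2 = n + 1 by omega] at hrec'
    exact lt_of_iInf_le (hbbar (n + 3) (by omega)).1 (ha (n + 3) (by omega)) (h₂.trans h₁) hrec'
  have pairs (n : ℕ) : a (n + 2) < a (n + 1) ∧ a (n + 3) < a (n + 2) := by
    induction n with
    | zero => constructor <;> linarith
    | succ n ih => exact ⟨ih.2, step n ih.1 ih.2⟩
  intro l hl
  obtain ⟨n, rfl⟩ := Nat.exists_eq_add_of_le' hl
  exact (pairs n).1
end

section
/- Let (b̄_l)_{l=1}^∞ be a sequence in [0,1] with lim_{l→∞} b̄_l = 0. Then there is no sequence (a_l)_{l=1}^∞ of nonnegative real numbers satisfying all of: a_1 ≥ a_2 + 1/2, a_2 ≥ a_3 + 1/2, and for every l ≥ 3, a_l ≥ min_{b∈[0, b̄_l]} ( max{b, (1−b)·a_{l−2}} + max{b, (1+b)·a_{l+1}} ) / 2. -/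
/-!
Write `x = a (l-2)`, `c = a l`, `y = a (l+1)` and `β = b̄ l`. Bounding both maxima by their
second arguments gives a bound linear in `b`, minimised at an endpoint of `[0, β]`; so `c ≤ x`
implies `(1 - β) (x - c) ≤ (1 + β) (c - y)`. If moreover `c = y`, bounding the first maximum by
`b` beyond its balance point `b = x / (1 + x)` forces `x ≤ c`. Starting from `a 1 > a 2 > a 3`,
these two facts make `a` strictly decreasing, and once `b̄ l ≤ 1/3` the first one says that no
decrement of `a` is smaller than the smaller of the two preceding ones. So `a` decreases at
least linearly, contradicting `a ≥ 0`.
-/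

open Set Filter

namespace RecursiveInequalities

noncomputable def cost (x y b : ℝ) : ℝ := (max b ((1 - b) * x) + max b ((1 + b) * y)) / 2

variable {β x y c : ℝ}

theorem le_of_iInf_cost_le {C : ℝ} (hβ : 0 ≤ β)
    (hC : ∀ b, 0 ≤ b → b ≤ β → C ≤ cost x y b)
    (h : ⨅ b : Icc 0 β, cost x y b ≤ c) : C ≤ c :=
  haveI : Nonempty (Icc 0 β) := (nonempty_Icc.2 hβ).to_subtype
  (le_ciInf fun b : Icc 0 β => hC b b.2.1 b.2.2).trans h

theorem linear_le_cost (x y b : ℝ) : ((1 - b) * x + (1 + b) * y) / 2 ≤ cost x y b := by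
  unfold cost
  linarith [le_max_right b ((1 - b) * x), le_max_right b ((1 + b) * y)]

theorem sub_mul_le_of_iInf_cost_le (hβ : 0 ≤ β) (hcx : c ≤ x)
    (h : ⨅ b : Icc 0 β, cost x y b ≤ c) : (1 - β) * (x - c) ≤ (1 + β) * (c - y) := by
  rcases le_total x y with hxy | hyx
  · have hc : (x + y) / 2 ≤ c := le_of_iInf_cost_le hβ (fun b hb _ => by
      nlinarith [linear_le_cost x y b, mul_nonneg hb (sub_nonneg.2 hxy)]) h
    obtain rfl : x = c := by linarith
    obtain rfl : y = x := by linarith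
    simp
  · have hc : ((1 - β) * x + (1 + β) * y) / 2 ≤ c := le_of_iInf_cost_le hβ (fun b _ hbβ => by
      nlinarith [linear_le_cost x y b, mul_nonneg (sub_nonneg.2 hbβ) (sub_nonneg.2 hyx)]) h
    linarith

theorem cost_self_ge {t b : ℝ} (ht : (1 - t) * x = t) (hcx : c ≤ x) (hc : 0 ≤ c) :
    (t + (1 + t) * c) / 2 ≤ cost x c b := by
  unfold cost
  rcases le_total b t with hbt | htb
  · nlinarith [le_max_right b ((1 - b) * x), le_max_right b ((1 + b) * c),
      mul_nonneg (sub_nonneg.2 hbt) (sub_nonneg.2 hcx)]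
  · nlinarith [le_max_left b ((1 - b) * x), le_max_right b ((1 + b) * c),
      mul_nonneg (sub_nonneg.2 htb) hc]

theorem le_of_iInf_cost_self_le (hβ : 0 ≤ β) (hx : 0 ≤ x) (hc : 0 ≤ c)
    (h : ⨅ b : Icc 0 β, cost x c b ≤ c) : x ≤ c := by
  by_contra! hcx
  have hx1 : 0 < 1 + x := by linarith
  have ht : (1 - x / (1 + x)) * x = x / (1 + x) := by field_simp; ring
  have hc' := le_of_iInf_cost_le hβ (fun _ _ _ => cost_self_ge ht hcx.le hc) h
  have : x / (1 + x) * (1 + x) = x := div_mul_cancel₀ x hx1.ne'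
  nlinarith

theorem lt_of_iInf_cost_le (hβ₀ : 0 ≤ β) (hβ₁ : β ≤ 1) (hy : 0 ≤ y) (hcx : c < x)
    (h : ⨅ b : Icc 0 β, cost x y b ≤ c) : y < c := by
  have key := sub_mul_le_of_iInf_cost_le hβ₀ hcx.le h
  have hyc : y ≤ c := by nlinarith [mul_nonneg (sub_nonneg.2 hβ₁) (sub_nonneg.2 hcx.le)]
  rcases hyc.lt_or_eq with hyc | rfl
  · exact hyc
  · exact absurd (le_of_iInf_cost_self_le hβ₀ (hy.trans hcx.le) hy h) hcx.not_ge

/-- The threshold `1/3` is where `2 (1 - β) ≥ 1 + β`. -/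
theorem min_sub_le_of_iInf_cost_le {z : ℝ} (hβ₀ : 0 ≤ β) (hβ : β ≤ 1 / 3)
    (hzx : z ≤ x) (hcz : c ≤ z) (h : ⨅ b : Icc 0 β, cost x y b ≤ c) :
    min (x - z) (z - c) ≤ c - y := by
  have key := sub_mul_le_of_iInf_cost_le hβ₀ (hcz.trans hzx) h
  have h₁ := min_le_left (x - z) (z - c)
  have h₂ := min_le_right (x - z) (z - c)
  have h₀ : 0 ≤ min (x - z) (z - c) := le_min (sub_nonneg.2 hzx) (sub_nonneg.2 hcz)
  nlinarith [mul_nonneg (by linarith : (0 : ℝ) ≤ 1 / 3 - β) h₀]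

theorem min_le_of_forall_min_le {e : ℕ → ℝ} (h : ∀ n, min (e n) (e (n + 1)) ≤ e (n + 2))
    (n : ℕ) : min (e 0) (e 1) ≤ e n :=
  have hmono : Monotone fun n => min (e n) (e (n + 1)) :=
    monotone_nat_of_le_succ fun n => le_min (min_le_right _ _) (h n)
  (hmono n.zero_le).trans (min_le_left _ _)

theorem exists_neg_of_le_sub {a : ℕ → ℝ} {m : ℝ} (hm : 0 < m)
    (h : ∀ n, m ≤ a n - a (n + 1)) : ∃ n, a n < 0 := by
  have hlin : ∀ n : ℕ, a n ≤ a 0 - n * m := by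
    intro n
    induction n with
    | zero => simp
    | succ n ih => push_cast; linarith [h n]
  obtain ⟨n, hn⟩ := exists_nat_gt (a 0 / m)
  rw [div_lt_iff₀ hm] at hn
  exact ⟨n, by linarith [hlin n]⟩

theorem exists_neg_of_min_sub_le {a : ℕ → ℝ} (h₀ : a 1 < a 0) (h₁ : a 2 < a 1)
    (h : ∀ n, min (a n - a (n + 1)) (a (n + 1) - a (n + 2)) ≤ a (n + 2) - a (n + 3)) :
    ∃ n, a n < 0 :=
  exists_neg_of_le_sub (lt_min (sub_pos.2 h₀) (sub_pos.2 h₁))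
    (min_le_of_forall_min_le (e := fun n => a n - a (n + 1)) h)

theorem strictAnti_of_iInf_cost_le {β a : ℕ → ℝ} (hβ : ∀ k, β (k + 3) ∈ Icc 0 1)
    (ha : ∀ k, 0 ≤ a (k + 1))
    (hrec : ∀ k, ⨅ b : Icc 0 (β (k + 3)), cost (a (k + 1)) (a (k + 4)) b ≤ a (k + 3))
    (h₁ : a 2 < a 1) (h₂ : a 3 < a 2) (k : ℕ) : a (k + 2) < a (k + 1) := by
  suffices ∀ k, a (k + 2) < a (k + 1) ∧ a (k + 3) < a (k + 2) from (this k).1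
  intro k
  induction k with
  | zero => exact ⟨h₁, h₂⟩
  | succ k ih =>
    exact ⟨ih.2, lt_of_iInf_cost_le (hβ k).1 (hβ k).2 (ha (k + 3)) (ih.2.trans ih.1) (hrec k)⟩

end RecursiveInequalities

open RecursiveInequalities

/-- Let `(b̄ l)_{l ≥ 1}` be a sequence in `[0,1]` with `b̄ l → 0` as `l → ∞`.  Then there
is no sequence `(a l)_{l ≥ 1}` of nonnegative reals satisfying `a 1 ≥ a 2 + 1/2`,
`a 2 ≥ a 3 + 1/2`, and for every `l ≥ 3`
`a l ≥ min_{b ∈ [0, b̄ l]} (max {b, (1-b)·a (l-2)} + max {b, (1+b)·a (l+1)}) / 2`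
(the minimum over the compact interval is attained, and equals the infimum used below). -/
theorem no_sequence_satisfying_recursive_inequalities (bbar : ℕ → ℝ)
    (hbbar : ∀ l, 1 ≤ l → bbar l ∈ Set.Icc (0 : ℝ) 1)
    (hlim : Filter.Tendsto bbar Filter.atTop (nhds 0)) :
    ¬ ∃ a : ℕ → ℝ, (∀ l, 1 ≤ l → 0 ≤ a l) ∧
      a 2 + 1 / 2 ≤ a 1 ∧ a 3 + 1 / 2 ≤ a 2 ∧
      ∀ l : ℕ, 3 ≤ l →
        (⨅ b : Set.Icc (0 : ℝ) (bbar l),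
          (max b.1 ((1 - b.1) * a (l - 2)) + max b.1 ((1 + b.1) * a (l + 1))) / 2) ≤ a l := by
  rintro ⟨a, ha, h₁, h₂, hrec⟩
  have hβ (k : ℕ) : bbar (k + 3) ∈ Icc 0 1 := hbbar (k + 3) (by omega)
  have hstep (k : ℕ) :
      ⨅ b : Icc 0 (bbar (k + 3)), cost (a (k + 1)) (a (k + 4)) b ≤ a (k + 3) :=
    hrec (k + 3) (by omega)
  have hanti := strictAnti_of_iInf_cost_le hβ (fun k => ha (k + 1) (by omega)) hstep
    (by linarith) (by linarith)
  obtain ⟨N, hN⟩ :=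
    eventually_atTop.1 (hlim.eventually (ge_mem_nhds (by norm_num : (0 : ℝ) < 1 / 3)))
  obtain ⟨n, hn⟩ :=
    exists_neg_of_min_sub_le (a := fun n => a (N + n + 1)) (hanti N) (hanti (N + 1))
      fun n => min_sub_le_of_iInf_cost_le (hβ (N + n)).1 (hN _ (by omega)) (hanti _).le
        (hanti _).le (hstep (N + n))
  exact hn.not_ge (ha _ (by omega))
end

section
/- Let 0 < r < 1 satisfy r + r² > 1 and let l_0 ≥ 2 be an integer. Then there is no strictly decreasing sequence (a_l)_{l=1}^∞ of nonnegative real numbers satisfying a_l − a_{l+1} ≥ r·(a_{l−2} − a_l) for every l > l_0. -/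
/-!
Put `g n = a n - a (n + 2)`. Adding the hypothesis at `l = n + 2` and `l = n + 3` gives
`r (g n + g (n + 1)) ≤ g (n + 2)`, and applying this twice yields
`(r + r²) g n ≤ g (n + 2)`. Since `r + r² > 1` and the gaps are positive, `g` grows
geometrically along every other index, whereas `g n ≤ a n ≤ a 1` for a decreasing nonnegative
sequence.
-/

open Filter

section GapRecurrence

variable {g : ℕ → ℝ} {r q : ℝ}

theorem eventually_add_sq_mul_le_of_recurrence (hr : 0 ≤ r) (hg : ∀ᶠ n in atTop, 0 ≤ g n)
    (hrec : ∀ᶠ n in atTop, r * (g n + g (n + 1)) ≤ g (n + 2)) :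
    ∀ᶠ n in atTop, (r + r ^ 2) * g n ≤ g (n + 2) := by
  rw [← map_add_atTop_eq_nat 1, eventually_map]
  filter_upwards [hg, hrec, (tendsto_add_atTop_nat 1).eventually hrec] with n h0 h1 h2
  have h3 : r * (r * (g n + g (n + 1))) ≤ r * g (n + 2) := mul_le_mul_of_nonneg_left h1 hr
  have h4 : 0 ≤ r ^ 2 * g n := mul_nonneg (sq_nonneg r) h0
  linarith

theorem not_isBoundedUnder_of_eventually_mul_le (hq : 1 < q) (hg : ∀ᶠ n in atTop, 0 < g n)
    (hgrowth : ∀ᶠ n in atTop, q * g n ≤ g (n + 2)) :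
    ¬ IsBoundedUnder (· ≤ ·) atTop g := by
  obtain ⟨N, hN⟩ := eventually_atTop.1 (hg.and hgrowth)
  have hgeom : ∀ k, q ^ k * g N ≤ g (N + 2 * k) :=
    fun k ↦ geom_le (u := fun k ↦ g (N + 2 * k)) (by linarith) k fun j _ ↦ (hN _ (by omega)).2
  have hsub : Tendsto (fun k ↦ g (N + 2 * k)) atTop atTop :=
    tendsto_atTop_mono hgeom <|
      (tendsto_pow_atTop_atTop_of_one_lt hq).atTop_mul_const (hN N le_rfl).1
  have hidx : Tendsto (fun k : ℕ ↦ N + 2 * k) atTop atTop :=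
    tendsto_atTop_mono (fun k ↦ by simp only [id]; omega) tendsto_id
  rintro ⟨B, hB⟩
  obtain ⟨k, hk_le, hk_gt⟩ :=
    ((hidx.eventually (eventually_map.1 hB)).and (hsub.eventually_gt_atTop B)).exists
  exact hk_le.not_gt hk_gt

end GapRecurrence

theorem no_strictly_decreasing_sequence_with_geometric_gaps_general (r : ℝ)
    (hr0 : 0 < r) (hr : 1 < r + r ^ 2) (l₀ : ℕ) :
    ¬ ∃ a : ℕ → ℝ, (∀ l, 1 ≤ l → 0 ≤ a l) ∧ (∀ l, 1 ≤ l → a (l + 1) < a l) ∧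
      ∀ l : ℕ, l₀ < l → r * (a (l - 2) - a l) ≤ a l - a (l + 1) := by
  rintro ⟨a, hpos, hdec, hrec⟩
  set g : ℕ → ℝ := fun n ↦ a n - a (n + 2) with hg
  have hg_pos : ∀ᶠ n in atTop, 0 < g n := eventually_atTop.2
    ⟨1, fun n hn ↦ by simp only [hg]; linarith [hdec n hn, hdec (n + 1) (by omega)]⟩
  have hg_rec : ∀ᶠ n in atTop, r * (g n + g (n + 1)) ≤ g (n + 2) := eventually_atTop.2
    ⟨l₀, fun n hn ↦ by
      have h2 := hrec (n + 2) (by omega)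
      have h3 := hrec (n + 3) (by omega)
      simp only [Nat.add_sub_cancel, Nat.reduceSubDiff] at h2 h3
      simp only [hg]
      linarith⟩
  have hanti : AntitoneOn a {n | 1 ≤ n} :=
    antitoneOn_nat_Ici_of_succ_le fun n hn ↦ (hdec n hn).le
  have hg_bdd : IsBoundedUnder (· ≤ ·) atTop g := isBoundedUnder_of_eventually_le <|
    eventually_atTop.2 ⟨1, fun n hn ↦ by
      simp only [hg]
      have h1 : a n ≤ a 1 := hanti (le_refl 1) hn hn
      linarith [hpos (n + 2) (by omega)]⟩
  exact not_isBoundedUnder_of_eventually_mul_le hr hg_pos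
    (eventually_add_sq_mul_le_of_recurrence hr0.le (hg_pos.mono fun _ ↦ le_of_lt) hg_rec) hg_bdd

/-- Let `0 < r < 1` with `r + r² > 1` and let `l₀ ≥ 2` be an integer.  Then there is no
strictly decreasing sequence `(a l)_{l ≥ 1}` of nonnegative reals satisfying
`a l - a (l+1) ≥ r · (a (l-2) - a l)` for every `l > l₀`. -/
theorem no_strictly_decreasing_sequence_with_geometric_gaps (r : ℝ)
    (hr0 : 0 < r) (hr1 : r < 1) (hr : 1 < r + r ^ 2) (l₀ : ℕ) (hl₀ : 2 ≤ l₀) :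
    ¬ ∃ a : ℕ → ℝ, (∀ l, 1 ≤ l → 0 ≤ a l) ∧ (∀ l, 1 ≤ l → a (l + 1) < a l) ∧
      ∀ l : ℕ, l₀ < l → r * (a (l - 2) - a l) ≤ a l - a (l + 1) :=
  no_strictly_decreasing_sequence_with_geometric_gaps_general r hr0 hr l₀
end

section
/- Let (a_1,...,a_l) be a good list with l ≥ 2. Then the list (a_1,...,a_l, a_1 + a_l) obtained by appending a_1 + a_l is good, and the list (a_2,...,a_{l−1}) obtained by deleting the first and last entries is good (for l = 2 the resulting empty list is vacuously good). -/
/-- `GoodList l a` says that the finite list `(a 1, …, a l)` is *good*: all entries are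
positive, the list is non-decreasing, and its consecutive differences are non-decreasing
and bounded by the first entry `a 1`.  (The empty list, `l = 0`, is vacuously good.) -/
def GoodList (l : ℕ) (a : ℕ → ℝ) : Prop :=
  (∀ i, 1 ≤ i → i ≤ l → 0 < a i) ∧
  (∀ i, 1 ≤ i → i + 1 ≤ l → a i ≤ a (i + 1)) ∧
  (∀ i, 1 ≤ i → i + 2 ≤ l → a (i + 1) - a i ≤ a (i + 2) - a (i + 1)) ∧
  (∀ i, 1 ≤ i → i + 1 ≤ l → a (i + 1) - a i ≤ a 1)

namespace GoodList

variable {l : ℕ} {a : ℕ → ℝ}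

theorem of_le {m : ℕ} (h : GoodList l a) (hml : m ≤ l) : GoodList m a := by
  obtain ⟨hpos, hmono, hconv, hbd⟩ := h
  exact ⟨fun i hi him => hpos i hi (by omega), fun i hi him => hmono i hi (by omega),
    fun i hi him => hconv i hi (by omega), fun i hi him => hbd i hi (by omega)⟩

/-- The bound on the differences survives the shift because `a 1 ≤ a 2`. -/
theorem tail (h : GoodList (l + 1) a) : GoodList l (fun i => a (i + 1)) := by
  obtain ⟨hpos, hmono, hconv, hbd⟩ := h
  refine ⟨fun i hi hil => hpos (i + 1) (by omega) (by omega),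
    fun i hi hil => hmono (i + 1) (by omega) (by omega),
    fun i hi hil => hconv (i + 1) (by omega) (by omega), fun i hi hil => ?_⟩
  calc a (i + 1 + 1) - a (i + 1) ≤ a 1 := hbd (i + 1) (by omega) (by omega)
    _ ≤ a 2 := hmono 1 le_rfl (by omega)

theorem snoc {x : ℝ} (h : GoodList l a) (hl : 1 ≤ l) (hmono_last : a l ≤ x)
    (hconv_last : 2 ≤ l → a l - a (l - 1) ≤ x - a l) (hbd_last : x - a l ≤ a 1) :
    GoodList (l + 1) (fun i => if i = l + 1 then x else a i) := by
  obtain ⟨hpos, hmono, hconv, hbd⟩ := h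
  set b : ℕ → ℝ := fun i => if i = l + 1 then x else a i
  have hlast : b (l + 1) = x := if_pos rfl
  have hinit : ∀ i ≤ l, b i = a i := fun i hi => if_neg (by omega)
  refine ⟨fun i hi hil => ?_, fun i hi hil => ?_, fun i hi hil => ?_, fun i hi hil => ?_⟩
  · rcases (show i ≤ l ∨ i = l + 1 by omega) with hil | rfl
    · simpa only [hinit i hil] using hpos i hi hil
    · simpa only [hlast] using (hpos l hl le_rfl).trans_le hmono_last
  · rcases (show i + 1 ≤ l ∨ i = l by omega) with hil | rfl
    · simpa only [hinit i (by omega), hinit (i + 1) hil] using hmono i hi hil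
    · simpa only [hinit i le_rfl, hlast] using hmono_last
  · rcases (show i + 2 ≤ l ∨ i + 1 = l by omega) with hil | hi1
    · simpa only [hinit i (by omega), hinit (i + 1) (by omega), hinit (i + 2) hil]
        using hconv i hi hil
    · obtain rfl : i = l - 1 := by omega
      rw [show l - 1 + 2 = l + 1 by omega, hlast, show l - 1 + 1 = l by omega, hinit l le_rfl,
        hinit (l - 1) (by omega)]
      exact hconv_last (by omega)
  · rw [hinit 1 (by omega)]
    rcases (show i + 1 ≤ l ∨ i = l by omega) with hil | rfl
    · simpa only [hinit i (by omega), hinit (i + 1) hil] using hbd i hi hil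
    · simpa only [hinit i le_rfl, hlast] using hbd_last

end GoodList

/-- If `(a 1, …, a l)` is a good list with `l ≥ 2`, then the list
`(a 1, …, a l, a 1 + a l)` obtained by appending `a 1 + a l` is good, and the list
`(a 2, …, a (l-1))` obtained by deleting the first and last entries is good (for `l = 2`
the resulting empty list is vacuously good). -/
theorem goodList_step (l : ℕ) (hl : 2 ≤ l) (a : ℕ → ℝ) (h : GoodList l a) :
    GoodList (l + 1) (fun i => if i = l + 1 then a 1 + a l else a i) ∧
    GoodList (l - 2) (fun i => a (i + 1)) := by
  have ha₁ : 0 < a 1 := h.1 1 le_rfl (by omega)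
  have hbd_last : a l - a (l - 1) ≤ a 1 := by
    simpa only [show l - 1 + 1 = l by omega] using h.2.2.2 (l - 1) (by omega) (by omega)
  -- The appended difference is exactly `a 1`, which dominates every earlier difference.
  refine ⟨h.snoc (by omega) (by linarith) (fun _ => by linarith) (by linarith), ?_⟩
  exact (h.of_le (by omega : l - 2 + 1 ≤ l)).tail
end

section
/- Let (a_1,...,a_l) be a good list. Then a_l ≤ a_{l−k} + k·a_1 for every integer 0 ≤ k ≤ l−1, and consequently a_l ≤ (1/k)·∑_{j=1}^{l} a_j + ((k+1)/2)·a_1 for every integer 1 ≤ k ≤ l−1. -/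
open Finset

lemma le_add_mul_of_forall_sub_le {a : ℕ → ℝ} {c : ℝ} {m n : ℕ} (hmn : m ≤ n)
    (hstep : ∀ i, m ≤ i → i < n → a (i + 1) - a i ≤ c) :
    a n ≤ a m + (n - m : ℕ) * c := by
  induction n, hmn using Nat.le_induction with
  | base => simp
  | succ n hmn ih =>
    have hlast := hstep n hmn n.lt_succ_self
    have hprev := ih fun i hmi hin => hstep i hmi (hin.trans n.lt_succ_self)
    rw [Nat.succ_sub hmn]
    push_cast
    linarith

lemma sum_range_cast_id (k : ℕ) : ∑ i ∈ range k, (i : ℝ) = k * (k - 1) / 2 := by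
  induction k with
  | zero => simp
  | succ k ih =>
    rw [sum_range_succ, ih]
    push_cast
    ring

lemma le_sum_div_add_mul_of_forall_le_add_mul {x c : ℝ} {b : ℕ → ℝ} {k : ℕ} (hk : 0 < k)
    (h : ∀ i < k, x ≤ b i + i * c) :
    x ≤ (∑ i ∈ range k, b i) / k + (k - 1) / 2 * c := by
  have hk' : (0 : ℝ) < k := Nat.cast_pos.mpr hk
  have hsum : k * x ≤ ∑ i ∈ range k, b i + k * (k - 1) / 2 * c := by
    have := sum_le_sum fun i hi => h i (mem_range.mp hi)
    rwa [sum_const, card_range, nsmul_eq_mul, sum_add_distrib, ← sum_mul,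
      sum_range_cast_id] at this
  rw [div_add' _ _ _ hk'.ne', le_div_iff₀ hk']
  linarith

lemma sum_range_sub_le_sum_Icc {a : ℕ → ℝ} {k l : ℕ} (hkl : k ≤ l)
    (hnonneg : ∀ j, 1 ≤ j → j ≤ l → 0 ≤ a j) :
    ∑ i ∈ range k, a (l - i) ≤ ∑ j ∈ Icc 1 l, a j := by
  rw [range_eq_Ico, sum_Ico_reflect a 0 (by omega)]
  refine sum_le_sum_of_subset_of_nonneg (fun j hj => ?_) fun j hj _ => ?_
  · simp only [mem_Ico, mem_Icc] at hj ⊢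
    omega
  · exact hnonneg j (mem_Icc.mp hj).1 (mem_Icc.mp hj).2

/-- If `(a 1, …, a l)` is a good list, then `a l ≤ a (l - k) + k · a 1` for every integer
`0 ≤ k ≤ l - 1`, and consequently
`a l ≤ (1/k) · ∑_{j=1}^{l} a j + ((k+1)/2) · a 1` for every integer `1 ≤ k ≤ l - 1`. -/
theorem goodList_last_bounds (l : ℕ) (a : ℕ → ℝ) (h : GoodList l a) :
    (∀ k : ℕ, k ≤ l - 1 → a l ≤ a (l - k) + (k : ℝ) * a 1) ∧
    (∀ k : ℕ, 1 ≤ k → k ≤ l - 1 →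
      a l ≤ (1 / (k : ℝ)) * (∑ j ∈ Finset.Icc 1 l, a j) + (((k : ℝ) + 1) / 2) * a 1) := by
  obtain ⟨hpos, -, -, hstep⟩ := h
  have hwalk : ∀ k : ℕ, k ≤ l - 1 → a l ≤ a (l - k) + (k : ℝ) * a 1 := fun k hk => by
    have := le_add_mul_of_forall_sub_le (Nat.sub_le l k) fun i hi hil =>
      hstep i (by omega) (by omega)
    rwa [Nat.sub_sub_self (by omega)] at this
  refine ⟨hwalk, fun k hk1 hk2 => ?_⟩
  have ha1 : 0 ≤ a 1 := (hpos 1 le_rfl (by omega)).le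
  have htail := sum_range_sub_le_sum_Icc (k := k) (by omega) fun j hj hjl => (hpos j hj hjl).le
  calc a l ≤ (∑ i ∈ range k, a (l - i)) / k + (k - 1) / 2 * a 1 :=
        le_sum_div_add_mul_of_forall_le_add_mul hk1 fun i hi => hwalk i (by omega)
    _ ≤ 1 / k * ∑ j ∈ Icc 1 l, a j + (k + 1) / 2 * a 1 := by
        rw [one_div_mul_eq_div]
        gcongr
        linarith
end

section
/- Let (a_1,...,a_l) be a good list with l ≥ 2. Then (a_1 + a_l) / (∑_{j=1}^{l} a_j) ≤ √(2/l) + 2/l. -/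
/-!
Since the list is non-decreasing with increments at most `a 1`, every entry satisfies
`a i - a 1 ≥ max 0 ((a l - a 1) - (l - i) * a 1)`. Summing this staircase lower bound (by
telescoping its squares) gives `2 l (a 1)² + (a l - a 1)² ≤ 2 (a 1) ∑ a j`. Writing
`a 1 + a l = 2 a 1 + (a l - a 1)`, this bound yields `2 a 1 / ∑ a j ≤ 2 / l` directly, and
`(a l - a 1) / ∑ a j ≤ √(2 / l)` after AM–GM on its left-hand side.
-/

open Finset

theorem sq_sub_sq_le_two_mul_of_le {p r c y : ℝ} (hr : 0 ≤ r) (hrp : r ≤ p) (hpr : p - r ≤ c)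
    (hpy : p ≤ y) : p ^ 2 - r ^ 2 ≤ 2 * c * y := by
  nlinarith

theorem sq_le_two_mul_sum_of_staircase_le {n : ℕ} {c D : ℝ} {y : ℕ → ℝ} (hc : 0 ≤ c)
    (hD : 0 ≤ D) (hDn : D ≤ n * c) (hy₀ : ∀ i ∈ Icc 1 n, 0 ≤ y i)
    (hy : ∀ i ∈ Icc 1 n, D - (n - i) * c ≤ y i) :
    D ^ 2 ≤ 2 * c * ∑ i ∈ Icc 1 n, y i := by
  set q : ℕ → ℝ := fun i => max 0 (D - (n - i) * c) with hq
  have hstep : ∀ i ∈ range n, q (i + 1) ^ 2 - q i ^ 2 ≤ 2 * c * y (i + 1) := by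
    intro i hi
    have hi' : i + 1 ∈ Icc 1 n := by simp only [mem_range, mem_Icc] at hi ⊢; omega
    have hsucc : q (i + 1) = max 0 (D - (n - i) * c + c) := by simp only [hq]; push_cast; ring_nf
    rw [hsucc]
    refine sq_sub_sq_le_two_mul_of_le (le_max_left _ _) (max_le_max le_rfl (by linarith)) ?_
      (max_le (hy₀ _ hi') ?_)
    · rw [sub_le_iff_le_add]
      exact max_le (by positivity) (by linarith [le_max_right 0 (D - (n - i) * c)])
    · have := hy _ hi'
      push_cast at this
      linarith
  calc D ^ 2 = q n ^ 2 - q 0 ^ 2 := by simp [hq, hD, hDn]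
    _ = ∑ i ∈ range n, (q (i + 1) ^ 2 - q i ^ 2) := (sum_range_sub (fun i => q i ^ 2) n).symm
    _ ≤ ∑ i ∈ range n, 2 * c * y (i + 1) := sum_le_sum hstep
    _ = 2 * c * ∑ i ∈ Icc 1 n, y i := by
      rw [← mul_sum, range_eq_Ico, sum_Ico_add' y 0 n 1, zero_add, Ico_add_one_right_eq_Icc]

theorem two_mul_add_div_le_sqrt_add {n : ℕ} {c D S : ℝ} (hn : 0 < n) (hc : 0 < c)
    (h : 2 * n * c ^ 2 + D ^ 2 ≤ 2 * c * S) :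
    (2 * c + D) / S ≤ √(2 / n) + 2 / n := by
  have hn' : (0 : ℝ) < n := by exact_mod_cast hn
  have hS : n * c ≤ S := by nlinarith [sq_nonneg D]
  have hS₀ : 0 < S := lt_of_lt_of_le (by positivity) hS
  have hamgm : 2 * n * D ^ 2 ≤ S ^ 2 := by
    have h₂ : 4 * c ^ 2 * (2 * n * D ^ 2) ≤ 4 * c ^ 2 * S ^ 2 :=
      calc 4 * c ^ 2 * (2 * n * D ^ 2) ≤ (2 * n * c ^ 2 + D ^ 2) ^ 2 := by
            nlinarith [sq_nonneg (2 * n * c ^ 2 - D ^ 2)]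
        _ ≤ (2 * c * S) ^ 2 := pow_le_pow_left₀ (by positivity) h 2
        _ = 4 * c ^ 2 * S ^ 2 := by ring
    exact le_of_mul_le_mul_left h₂ (by positivity)
  rw [add_div, add_comm]
  refine add_le_add ?_ ?_
  · calc D / S ≤ |D / S| := le_abs_self _
      _ ≤ √(2 / n) := Real.abs_le_sqrt <| by
        rw [div_pow, div_le_div_iff₀ (by positivity) hn']
        nlinarith [sq_nonneg D]
  · rw [div_le_div_iff₀ hS₀ hn']
    linarith

namespace GoodList

variable {l : ℕ} {a : ℕ → ℝ}

theorem monotoneOn (h : GoodList l a) : MonotoneOn a (Set.Icc 1 l) := by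
  intro i ⟨hi, _⟩ j ⟨_, hj⟩ hij
  rw [← sub_nonneg, ← sum_Ico_sub a hij]
  refine sum_nonneg fun k hk => sub_nonneg.2 (h.2.1 k ?_ ?_) <;>
    simp only [mem_Ico] at hk <;> omega

theorem sub_le (h : GoodList l a) {i j : ℕ} (hi : 1 ≤ i) (hij : i ≤ j) (hj : j ≤ l) :
    a j - a i ≤ (j - i) * a 1 := by
  rw [← sum_Ico_sub a hij]
  have := sum_le_card_nsmul (Ico i j) (fun k => a (k + 1) - a k) (a 1) fun k hk =>
    h.2.2.2 k (by simp only [mem_Ico] at hk; omega) (by simp only [mem_Ico] at hk; omega)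
  simpa [Nat.cast_sub hij] using this

theorem two_mul_sq_add_sq_le (h : GoodList l a) (hl : 1 ≤ l) :
    2 * l * a 1 ^ 2 + (a l - a 1) ^ 2 ≤ 2 * a 1 * ∑ j ∈ Icc 1 l, a j := by
  have ha₁ : 0 < a 1 := h.1 1 le_rfl hl
  have hstair := sq_le_two_mul_sum_of_staircase_le (n := l) (y := fun i => a i - a 1) ha₁.le
    (sub_nonneg.2 (h.monotoneOn ⟨le_rfl, hl⟩ ⟨hl, le_rfl⟩ hl))
    (by nlinarith [h.sub_le le_rfl hl le_rfl])
    (fun i hi => by rw [mem_Icc] at hi; exact sub_nonneg.2 (h.monotoneOn ⟨le_rfl, hl⟩ hi hi.1))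
    (fun i hi => by rw [mem_Icc] at hi; linarith [h.sub_le hi.1 hi.2 le_rfl])
  rw [sum_sub_distrib, sum_const, Nat.card_Icc, nsmul_eq_mul, Nat.add_sub_cancel] at hstair
  linarith

end GoodList

/-- If `(a 1, …, a l)` is a good list with `l ≥ 2`, then the Labouchère betting
proportion satisfies `(a 1 + a l) / (∑_{j=1}^{l} a j) ≤ √(2/l) + 2/l`. -/
theorem goodList_bet_proportion (l : ℕ) (hl : 2 ≤ l) (a : ℕ → ℝ) (h : GoodList l a) :
    (a 1 + a l) / (∑ j ∈ Finset.Icc 1 l, a j) ≤ Real.sqrt (2 / (l : ℝ)) + 2 / (l : ℝ) := by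
  have key := two_mul_add_div_le_sqrt_add (by omega) (h.1 1 le_rfl (by omega))
    (h.two_mul_sq_add_sq_le (by omega))
  rwa [two_mul, add_assoc, add_sub_cancel] at key
end

section
/- Consider the Labouchère evolution from an initial list L_0 of length l_0 whose smallest entry is a > 0, driven by an arbitrary (deterministic) sequence of win/loss outcomes. Then for every coup n occurring before the list becomes empty, the bet satisfies B_n ≥ a·max(l_{n−1} − l_0, 0), where l_{n−1} is the length of the list before coup n. -/
/-!
Every list of the evolution has its `i`-th entry (counted from `0`) at least `a` and at least
`a * (i + 1 - l₀)`. Initially `i < l₀`; a win shifts the entries to the left, which only lowers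
the bounds; a loss appends the bet `first + last ≥ a + a * (l - l₀)` at position `l`. The same
estimate of the bet at the current coup gives the theorem.
-/

open MeasureTheory ProbabilityTheory ENNReal

lemma labList_nil (w : ℕ → Bool) (n : ℕ) : labList [] w n = [] := by
  induction n with
  | zero => rfl
  | succ n ih => simp [labList, labStep, ih]

lemma labBet_singleton (x : ℝ) : labBet [x] = x := by
  simp [labBet]

lemma labBet_of_two_le_length {L : List ℝ} (hL : 2 ≤ L.length) :
    labBet L = L[0] + L[L.length - 1] := by
  obtain ⟨x, t, rfl⟩ :=
    List.exists_cons_of_ne_nil (List.ne_nil_of_length_pos (by omega : 0 < L.length))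
  rw [labBet, if_neg (by omega), List.headI_cons, List.getLastD_eq_getLast?,
    List.getLast?_eq_some_getLast (List.cons_ne_nil _ _), Option.getD_some,
    List.getLast_eq_getElem, List.getElem_cons_zero]

def LabEntryBound (a k : ℝ) (L : List ℝ) : Prop :=
  ∀ i (hi : i < L.length), a ≤ L[i] ∧ a * (i + 1 - k) ≤ L[i]

namespace LabEntryBound

variable {a k : ℝ} {L : List ℝ}

lemma of_forall_le (ha : 0 ≤ a) (hL : ∀ x ∈ L, a ≤ x) : LabEntryBound a L.length L := by
  intro i hi
  have hx := hL _ (List.getElem_mem hi)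
  have hi' : (i : ℝ) + 1 ≤ L.length := by exact_mod_cast hi
  exact ⟨hx, by nlinarith⟩

lemma tail_dropLast (ha : 0 ≤ a) (hL : LabEntryBound a k L) :
    LabEntryBound a k L.tail.dropLast := by
  intro i hi
  have hi' : i + 1 < L.length := by
    simp only [List.length_dropLast, List.length_tail] at hi; omega
  rw [List.getElem_dropLast, List.getElem_tail]
  obtain ⟨h₁, h₂⟩ := hL (i + 1) hi'
  push_cast at h₂
  exact ⟨h₁, by linarith⟩

lemma le_labBet (ha : 0 ≤ a) (hk : 1 ≤ k) (hL : LabEntryBound a k L) (hne : L ≠ []) :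
    a ≤ labBet L ∧ a * (L.length + 1 - k) ≤ labBet L := by
  have hpos : 0 < L.length := List.length_pos_iff.mpr hne
  obtain ⟨hfirst, -⟩ := hL 0 hpos
  rcases Nat.lt_or_ge L.length 2 with hlen | hlen
  · obtain ⟨x, rfl⟩ := List.length_eq_one_iff.mp (by omega : L.length = 1)
    simp only [List.getElem_singleton] at hfirst
    simp only [labBet_singleton, List.length_singleton]
    exact ⟨hfirst, by push_cast; nlinarith⟩
  · obtain ⟨hlast₁, hlast₂⟩ := hL (L.length - 1) (by omega)
    rw [Nat.cast_sub (by omega)] at hlast₂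
    rw [labBet_of_two_le_length hlen]
    push_cast at hlast₂
    constructor <;> linarith

lemma append_labBet (ha : 0 ≤ a) (hk : 1 ≤ k) (hL : LabEntryBound a k L) (hne : L ≠ []) :
    LabEntryBound a k (L ++ [labBet L]) := by
  intro i hi
  rw [List.length_append, List.length_singleton] at hi
  rcases Nat.lt_or_ge i L.length with hi' | hi'
  · rw [List.getElem_append_left hi']
    exact hL i hi'
  · have hi_eq : i = L.length := by omega
    rw [List.getElem_concat_length hi_eq, hi_eq]
    exact le_labBet ha hk hL hne

lemma labStep (ha : 0 ≤ a) (hk : 1 ≤ k) (hL : LabEntryBound a k L) (win : Bool) :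
    LabEntryBound a k (labStep L win) := by
  unfold _root_.labStep
  split_ifs with hne
  · intro i hi; simp at hi
  · exact hL.tail_dropLast ha
  · exact hL.append_labBet ha hk hne

end LabEntryBound

lemma labEntryBound_labList {L₀ : List ℝ} {a : ℝ} (ha : 0 ≤ a) (hne : L₀ ≠ [])
    (hmin : ∀ x ∈ L₀, a ≤ x) (w : ℕ → Bool) (n : ℕ) :
    LabEntryBound a L₀.length (labList L₀ w n) := by
  have hk : (1 : ℝ) ≤ L₀.length := by exact_mod_cast List.length_pos_iff.mpr hne
  induction n with
  | zero => exact LabEntryBound.of_forall_le ha hmin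
  | succ n ih => exact ih.labStep ha hk _

theorem labouchere_bet_lower_bound_general (L₀ : List ℝ) (a : ℝ) (ha : 0 < a)
    (haMin : ∀ x ∈ L₀, a ≤ x) (w : ℕ → Bool) :
    ∀ n : ℕ, labList L₀ w n ≠ [] →
      a * max (((labList L₀ w n).length : ℝ) - (L₀.length : ℝ)) 0 ≤
        labBet (labList L₀ w n) := by
  intro n hne
  have hL₀ : L₀ ≠ [] := by
    rintro rfl
    exact hne (labList_nil w n)
  have hk : (1 : ℝ) ≤ L₀.length := by exact_mod_cast List.length_pos_iff.mpr hL₀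
  obtain ⟨hbet₁, hbet₂⟩ :=
    (labEntryBound_labList ha.le hL₀ haMin w n).le_labBet ha.le hk hne
  rw [mul_max_of_nonneg _ _ ha.le, mul_zero]
  exact max_le (by linarith) (by linarith)

/-- Deterministic Labouchère evolution: from an initial list `L₀` whose smallest entry is
`a > 0`, driven by an arbitrary sequence of win/loss outcomes, the bet at any coup taking
place while the list is nonempty is at least `a · max (l - l₀) 0`, where `l` is the
current list length and `l₀` the initial length.  (The list before coup `n + 1` is
`labList L₀ w n`.) -/
theorem labouchere_bet_lower_bound (L₀ : List ℝ) (a : ℝ) (ha : 0 < a)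
    (haMem : a ∈ L₀) (haMin : ∀ x ∈ L₀, a ≤ x) (w : ℕ → Bool) :
    ∀ n : ℕ, labList L₀ w n ≠ [] →
      a * max (((labList L₀ w n).length : ℝ) - (L₀.length : ℝ)) 0 ≤
        labBet (labList L₀ w n) :=
  labouchere_bet_lower_bound_general L₀ a ha haMin w
end
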